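/- If a nested sequent Σ{[Γ]_v, [Δ]_u}_w is GD-invalid (falsified somewhere in a GD-model under the formula interpretation), then at least one of the two premises Σ{[Γ,[Δ]_u]_v}_w and Σ{[Δ,[Γ]_v]_u}_w of the linearity rule (lin) is GD-invalid. Equivalently, the (lin) rule is sound for GD: if both premises are GD-valid then the conclusion is GD-valid. -/

import Mathlib

/-!
Forcing the interpretation of a filled context depends monotonically, world by world, on which of the
nestings filled into its hole are forced there. So it suffices to show that at any world `v` of a
connected model, the interpretations of `[Γ,[Δ]]` and `[Δ,[Γ]]` together force `Γ` or `Δ`. If both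
failed at `v`, there would be worlds `u₁, u₂ ≥ v` refuting the root components of `Γ` and `Δ`;
the first premise then forces `Δ` at `u₁`, the second forces `Γ` at `u₂`. By connectedness
`u₁ ≤ u₂` or `u₂ ≤ u₁`, and the implication forced at the lower world is refuted at the upper one.
-/

inductive PForm (α : Type) : Type
  | var : α → PForm α
  | bot : PForm α
  | disj : PForm α → PForm α → PForm α
  | conj : PForm α → PForm α → PForm α
  | impl : PForm α → PForm α → PForm α

structure KModel (α : Type) where
  W : Type
  le : W → W → Prop
  refl : ∀ w, le w w
  trans : ∀ w u v, le w u → le u v → le w v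
  val : α → W → Prop
  mono : ∀ p w v, le w v → val p w → val p v

def KModel.force {α : Type} (M : KModel α) : M.W → PForm α → Prop
  | w, .var p => M.val p w
  | _, .bot => False
  | w, .disj φ ψ => M.force w φ ∨ M.force w ψ
  | w, .conj φ ψ => M.force w φ ∧ M.force w ψ
  | w, .impl φ ψ => ∀ u, M.le w u → M.force u φ → M.force u ψ

def KModel.Connected {α : Type} (M : KModel α) : Prop :=
  ∀ w u v, M.le w u → M.le w v → M.le u v ∨ M.le v u

/-- Nested sequents: trees whose nodes are lists of polarized formulas
(`true` = input •, `false` = output ∘). -/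
inductive NSeq (α : Type) : Type
  | node : List (PForm α × Bool) → List (NSeq α) → NSeq α

def bigConj {α : Type} : List (PForm α) → PForm α
  | [] => PForm.bot.impl PForm.bot
  | φ :: l => φ.conj (bigConj l)

def bigDisj {α : Type} : List (PForm α) → PForm α
  | [] => PForm.bot
  | φ :: l => φ.disj (bigDisj l)

/-- Formula interpretation of a nested sequent:
`⋀ inputs ⊃ (⋁ outputs ∨ interpretation of the nestings)`. -/
def NSeq.interp {α : Type} : NSeq α → PForm α
  | .node Γ kids =>
      (bigConj ((Γ.filter (fun x => x.2)).map Prod.fst)).impl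
        (bigDisj (((Γ.filter (fun x => !x.2)).map Prod.fst) ++
          kids.attach.map (fun s => NSeq.interp s.1)))
decreasing_by
  have := List.sizeOf_lt_of_mem s.2
  simp at *
  omega

/-- A nested-sequent context `Σ{·}_w`: a nested sequent with a distinguished
node at which additional nestings may be inserted. -/
inductive NCtx (α : Type) : Type
  | hole : List (PForm α × Bool) → List (NSeq α) → NCtx α
  | node : List (PForm α × Bool) → List (NSeq α) → NCtx α → NCtx α

/-- Insert the extra nestings `extra` at the distinguished node of the context. -/
def NCtx.fill {α : Type} : NCtx α → List (NSeq α) → NSeq α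
  | .hole Γ kids, extra => .node Γ (kids ++ extra)
  | .node Γ kids C, extra => .node Γ (kids ++ [C.fill extra])

/-- Add a nesting `[s]` inside a nested sequent (at its root component). -/
def NSeq.addChild {α : Type} : NSeq α → NSeq α → NSeq α
  | .node Γ kids, s => .node Γ (kids ++ [s])

/-- A nested sequent is GD-valid iff its formula interpretation is forced at
every world of every GD-model. -/
def GDValid {α : Type} (S : NSeq α) : Prop :=
  ∀ M : KModel α, M.Connected → ∀ w : M.W, M.force w S.interp

namespace NSeq

variable {α : Type}

def inputs (Γ : List (PForm α × Bool)) : List (PForm α) :=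
  (Γ.filter (fun x => x.2)).map Prod.fst

def outputs (Γ : List (PForm α × Bool)) : List (PForm α) :=
  (Γ.filter (fun x => !x.2)).map Prod.fst

theorem interp_node (Γ : List (PForm α × Bool)) (kids : List (NSeq α)) :
    (node Γ kids).interp =
      (bigConj (inputs Γ)).impl (bigDisj (outputs Γ ++ kids.map interp)) := by
  rw [interp, List.attach_map_val]
  rfl

end NSeq

namespace KModel

open NSeq

variable {α : Type} (M : KModel α)

def Refutes (u : M.W) : NSeq α → Prop
  | node Γ kids => M.force u (bigConj (inputs Γ)) ∧ (∀ φ ∈ outputs Γ, ¬ M.force u φ) ∧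
      ∀ s ∈ kids, ¬ M.force u s.interp

variable {M}

theorem force_bigDisj {w : M.W} {l : List (PForm α)} :
    M.force w (bigDisj l) ↔ ∃ φ ∈ l, M.force w φ := by
  induction l with
  | nil => simp [bigDisj, force]
  | cons φ l ih => simp [bigDisj, force, ih]

theorem force_interp_node {w : M.W} {Γ : List (PForm α × Bool)} {kids : List (NSeq α)} :
    M.force w (node Γ kids).interp ↔
      ∀ u, M.le w u → M.force u (bigConj (inputs Γ)) →
        (∃ φ ∈ outputs Γ, M.force u φ) ∨ ∃ s ∈ kids, M.force u s.interp := by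
  simp only [interp_node, force, force_bigDisj, List.mem_append, List.mem_map]
  simp [or_and_right, exists_or]

theorem force_interp_node_append {w : M.W} {Γ : List (PForm α × Bool)}
    {kids extra : List (NSeq α)} :
    M.force w (node Γ (kids ++ extra)).interp ↔
      ∀ u, M.le w u → M.force u (bigConj (inputs Γ)) →
        ((∃ φ ∈ outputs Γ, M.force u φ) ∨ ∃ s ∈ kids, M.force u s.interp) ∨
          ∃ s ∈ extra, M.force u s.interp := by
  simp only [force_interp_node, List.mem_append, or_and_right, exists_or, or_assoc]

theorem not_force_interp_iff {w : M.W} {S : NSeq α} :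
    ¬ M.force w S.interp ↔ ∃ u, M.le w u ∧ M.Refutes u S := by
  obtain ⟨Γ, kids⟩ := S
  simp only [force_interp_node, Refutes]
  push Not
  rfl

theorem not_force_interp_of_refutes {w u : M.W} {S : NSeq α} (hwu : M.le w u)
    (hS : M.Refutes u S) : ¬ M.force w S.interp :=
  not_force_interp_iff.2 ⟨u, hwu, hS⟩

theorem force_interp_of_refutes_of_force_addChild {w u : M.W} {S T : NSeq α}
    (hwu : M.le w u) (hS : M.Refutes u S) (h : M.force w (S.addChild T).interp) :
    M.force u T.interp := by
  obtain ⟨Γ, kids⟩ := S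
  obtain ⟨hin, hout, hkids⟩ := hS
  rw [addChild, force_interp_node_append] at h
  rcases h u hwu hin with (⟨φ, hφ, hφu⟩ | ⟨s, hs, hsu⟩) | hT
  · exact absurd hφu (hout φ hφ)
  · exact absurd hsu (hkids s hs)
  · simpa using hT

theorem force_interp_or_of_force_addChild (hc : M.Connected) {v : M.W} {Γ Δ : NSeq α}
    (h₁ : M.force v (Γ.addChild Δ).interp) (h₂ : M.force v (Δ.addChild Γ).interp) :
    M.force v Γ.interp ∨ M.force v Δ.interp := by
  by_contra! ⟨hΓ, hΔ⟩
  obtain ⟨u₁, hvu₁, hΓu₁⟩ := not_force_interp_iff.1 hΓ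
  obtain ⟨u₂, hvu₂, hΔu₂⟩ := not_force_interp_iff.1 hΔ
  have hΔu₁ := force_interp_of_refutes_of_force_addChild hvu₁ hΓu₁ h₁
  have hΓu₂ := force_interp_of_refutes_of_force_addChild hvu₂ hΔu₂ h₂
  rcases hc v u₁ u₂ hvu₁ hvu₂ with hu₁₂ | hu₂₁
  · exact not_force_interp_of_refutes hu₁₂ hΔu₂ hΔu₁
  · exact not_force_interp_of_refutes hu₂₁ hΓu₁ hΓu₂

theorem force_interp_node_append_of_imp {w : M.W} {Γ : List (PForm α × Bool)}
    {kids e₁ e₂ e₃ : List (NSeq α)}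
    (H : ∀ u, M.le w u → (∃ s ∈ e₁, M.force u s.interp) → (∃ s ∈ e₂, M.force u s.interp) →
      ∃ s ∈ e₃, M.force u s.interp)
    (h₁ : M.force w (node Γ (kids ++ e₁)).interp) (h₂ : M.force w (node Γ (kids ++ e₂)).interp) :
    M.force w (node Γ (kids ++ e₃)).interp := by
  rw [force_interp_node_append] at h₁ h₂ ⊢
  intro u hwu hin
  rcases h₁ u hwu hin with hroot | he₁
  · exact Or.inl hroot
  rcases h₂ u hwu hin with hroot | he₂
  · exact Or.inl hroot
  exact Or.inr (H u hwu he₁ he₂)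

theorem force_fill_of_imp (C : NCtx α) {e₁ e₂ e₃ : List (NSeq α)}
    (H : ∀ u, (∃ s ∈ e₁, M.force u s.interp) → (∃ s ∈ e₂, M.force u s.interp) →
      ∃ s ∈ e₃, M.force u s.interp)
    {w : M.W} (h₁ : M.force w (C.fill e₁).interp) (h₂ : M.force w (C.fill e₂).interp) :
    M.force w (C.fill e₃).interp := by
  induction C generalizing w with
  | hole Γ kids => exact force_interp_node_append_of_imp (fun u _ => H u) h₁ h₂
  | node Γ kids C ih =>
    exact force_interp_node_append_of_imp (by simpa using fun u _ => @ih u) h₁ h₂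

end KModel

/-- Soundness of the linearity rule `(lin)`: if both premises
`Σ{[Γ,[Δ]_u]_v}_w` and `Σ{[Δ,[Γ]_v]_u}_w` are GD-valid, then the conclusion
`Σ{[Γ]_v,[Δ]_u}_w` is GD-valid. -/
theorem lin_sound {α : Type} (C : NCtx α) (Γ Δ : NSeq α)
    (h1 : GDValid (C.fill [Γ.addChild Δ]))
    (h2 : GDValid (C.fill [Δ.addChild Γ])) :
    GDValid (C.fill [Γ, Δ]) := by
  intro M hc w
  refine M.force_fill_of_imp C ?_ (h1 M hc w) (h2 M hc w)
  simpa using fun v => KModel.force_interp_or_of_force_addChild hc (v := v)
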